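/- Let K be an algebraically closed field of characteristic zero and let λ_a, λ_b, λ_c ∈ K. Then the quotient of the free associative K-algebra K⟨a,b,c⟩ by the two-sided ideal generated by the elements a² − λ_a, b² − λ_b, c² − λ_c, ab + bc + ca, and ac + cb + ba is a nonzero algebra. -/
import Mathlib


universe u

noncomputable section

open FreeAlgebra

/-- The defining relations `a² = λ_a, b² = λ_b, c² = λ_c, ab + bc + ca = 0,
ac + cb + ba = 0`. -/
def FKRel' (K : Type u) [Field K] (la lb lc : K) :
    FreeAlgebra K (Fin 3) → FreeAlgebra K (Fin 3) → Prop := fun x y =>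
  y = 0 ∧
    (x = ι K (0 : Fin 3) * ι K 0 - algebraMap K _ la ∨
     x = ι K (1 : Fin 3) * ι K 1 - algebraMap K _ lb ∨
     x = ι K (2 : Fin 3) * ι K 2 - algebraMap K _ lc ∨
     x = ι K (0 : Fin 3) * ι K 1 + ι K 1 * ι K 2 + ι K 2 * ι K 0 ∨
     x = ι K (0 : Fin 3) * ι K 2 + ι K 2 * ι K 1 + ι K 1 * ι K 0)

open Polynomial in
/-- Existence of a root of the auxiliary cubic. -/
lemma FK_exists_mu (K : Type u) [Field K] [IsAlgClosed K] [CharZero K] (p q r : K)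
    (h : p = q → p = 0 → r = 0) :
    ∃ μ : K, (q - p) * μ ^ 3 + 3 * p * μ ^ 2 - 3 * p * μ + (p - r) = 0 := by
  set f : K[X] := C (q - p) * X ^ 3 + C (3 * p) * X ^ 2 + C (-(3 * p)) * X + C (p - r)
    with hf
  have hdeg : f.degree ≠ 0 := by
    intro hd
    have h3 : f.coeff 3 = 0 := coeff_eq_zero_of_degree_lt (by rw [hd]; norm_num)
    have h2 : f.coeff 2 = 0 := coeff_eq_zero_of_degree_lt (by rw [hd]; norm_num)
    have hqp : q - p = 0 := by
      have hc3 : f.coeff 3 = q - p := by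
        simp only [hf, coeff_add, coeff_C_mul, coeff_X_pow, coeff_C, coeff_X]
        norm_num
      rwa [hc3] at h3
    have hp : p = 0 := by
      have hc2 : f.coeff 2 = 3 * p := by
        simp only [hf, coeff_add, coeff_C_mul, coeff_X_pow, coeff_C, coeff_X]
        norm_num
      rw [hc2] at h2
      have h3ne : (3 : K) ≠ 0 := by norm_num
      exact (mul_eq_zero.mp h2).resolve_left h3ne
    have hq : p = q := (sub_eq_zero.mp hqp).symm
    have hr : r = 0 := h hq hp
    have hfz : f = 0 := by
      rw [hf, hqp, hp, hr]
      simp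
    rw [hfz] at hd
    simp at hd
  obtain ⟨μ, hμ⟩ := IsAlgClosed.exists_root f hdeg
  refine ⟨μ, ?_⟩
  have := hμ
  rw [Polynomial.IsRoot, hf] at this
  simp only [eval_add, eval_mul, eval_pow, eval_C, eval_X] at this
  linear_combination this

/-- Existence of a 2×2 matrix representation of the relations, under a mild
hypothesis on the ordering of the parameters. -/
lemma FK_exists_rep' (K : Type u) [Field K] [IsAlgClosed K] [CharZero K] (p q r : K)
    (h : p = q → p = 0 → r = 0) :
    ∃ A B C : Matrix (Fin 2) (Fin 2) K,
      A * A = p • 1 ∧ B * B = q • 1 ∧ C * C = r • 1 ∧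
      A * B + B * C + C * A = 0 ∧ A * C + C * B + B * A = 0 := by
  obtain ⟨μ, hμ⟩ := FK_exists_mu K p q r h
  obtain ⟨β, hβ⟩ : ∃ β : K, β ^ 2 = q := by
    obtain ⟨β, hβ⟩ := IsAlgClosed.exists_pow_nat_eq q (n := 2) (by norm_num)
    exact ⟨β, hβ⟩
  refine ⟨!![0, 1; p, 0], !![β, 0; -(p + μ * (q - p)), -β],
      !![μ * β, 1 - μ; (1 - μ) * p + μ * (-(p + μ * (q - p))), -(μ * β)], ?_, ?_, ?_, ?_, ?_⟩ <;>
    · ext i j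
      fin_cases i <;> fin_cases j <;>
        simp [Matrix.mul_apply, Fin.sum_univ_two, Matrix.one_apply] <;>
        first
          | ring1
          | linear_combination hβ
          | linear_combination -hβ
          | linear_combination μ * hβ
          | linear_combination -(μ * hβ)
          | linear_combination μ ^ 2 * hβ + hμ

/-- Existence of a 2×2 matrix representation of the relations. -/
lemma FK_exists_rep (K : Type u) [Field K] [IsAlgClosed K] [CharZero K] (la lb lc : K) :
    ∃ A B C : Matrix (Fin 2) (Fin 2) K,
      A * A = la • 1 ∧ B * B = lb • 1 ∧ C * C = lc • 1 ∧
      A * B + B * C + C * A = 0 ∧ A * C + C * B + B * A = 0 := by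
  by_cases ha : la = 0
  · by_cases hb : lb = 0
    · by_cases hc : lc = 0
      · exact FK_exists_rep' K la lb lc (fun _ _ => hc)
      · -- lc ≠ 0 : use ordering (lc, la, lb) and cyclic shift
        obtain ⟨A, B, C, hA, hB, hC, h1, h2⟩ :=
          FK_exists_rep' K lc la lb (fun _ h0 => absurd h0 hc)
        refine ⟨B, C, A, hB, hC, hA, ?_, ?_⟩
        · rw [← h1]; abel
        · rw [← h2]; abel
    · -- lb ≠ 0 : use ordering (lb, lc, la) and cyclic shift
      obtain ⟨A, B, C, hA, hB, hC, h1, h2⟩ :=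
        FK_exists_rep' K lb lc la (fun _ h0 => absurd h0 hb)
      refine ⟨C, A, B, hC, hA, hB, ?_, ?_⟩
      · rw [← h1]; abel
      · rw [← h2]; abel
  · exact FK_exists_rep' K la lb lc (fun _ h0 => absurd h0 ha)

/-- For any `λ_a, λ_b, λ_c` in an algebraically closed field of
characteristic zero, the quotient of `K⟨a,b,c⟩` by the ideal generated by
`a² − λ_a, b² − λ_b, c² − λ_c, ab + bc + ca, ac + cb + ba` is nonzero. -/
theorem deformed_FK3_dual_nontrivial
    (K : Type u) [Field K] [IsAlgClosed K] [CharZero K] (la lb lc : K) :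
    Nontrivial (RingQuot (FKRel' K la lb lc)) := by
  obtain ⟨A, B, C, hA, hB, hC, h1, h2⟩ := FK_exists_rep K la lb lc
  let φ : FreeAlgebra K (Fin 3) →ₐ[K] Matrix (Fin 2) (Fin 2) K :=
    FreeAlgebra.lift K ![A, B, C]
  have e0 : φ (ι K (0 : Fin 3)) = A := by
    simp [φ]
  have e1 : φ (ι K (1 : Fin 3)) = B := by
    simp [φ]
  have e2 : φ (ι K (2 : Fin 3)) = C := by
    simp [φ]
  have hrel : ∀ x y, FKRel' K la lb lc x y → φ x = φ y := by
    rintro x y ⟨rfl, (rfl | rfl | rfl | rfl | rfl)⟩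
    · rw [map_zero, map_sub, map_mul, e0, hA, AlgHom.commutes,
        Algebra.algebraMap_eq_smul_one, sub_self]
    · rw [map_zero, map_sub, map_mul, e1, hB, AlgHom.commutes,
        Algebra.algebraMap_eq_smul_one, sub_self]
    · rw [map_zero, map_sub, map_mul, e2, hC, AlgHom.commutes,
        Algebra.algebraMap_eq_smul_one, sub_self]
    · rw [map_zero, map_add, map_add, map_mul, map_mul, map_mul, e0, e1, e2]
      exact h1
    · rw [map_zero, map_add, map_add, map_mul, map_mul, map_mul, e0, e1, e2]
      exact h2
  let ψ : RingQuot (FKRel' K la lb lc) →ₐ[K] Matrix (Fin 2) (Fin 2) K :=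
    RingQuot.liftAlgHom K ⟨φ, hrel⟩
  refine ⟨⟨1, 0, fun h01 => ?_⟩⟩
  have h10 : (1 : Matrix (Fin 2) (Fin 2) K) = 0 := by
    simpa using congrArg ψ h01
  exact one_ne_zero h10

end
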